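/- Let X be a Polish space (a separable completely metrizable topological space). Then B_1(X) = B_1(X,ℝ), the space of real-valued Baire class one functions on X with the topology of pointwise convergence, is a normal space if and only if X is countable; in that case B_1(X) = ℝ^X and is a separable metrizable space. -/

import Mathlib

open Set Filter Topology TopologicalSpace

universe u v

/-- An ideal of compact sets in a topological space `X`. -/
structure IsCompactIdeal (X : Type u) [TopologicalSpace X] (I : Set (Set X)) : Prop where
  isCompact : ∀ A ∈ I, IsCompact A
  sUnion_eq : ⋃₀ I = Set.univ
  union_mem : ∀ A ∈ I, ∀ B ∈ I, A ∪ B ∈ I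
  inter_compact_mem : ∀ A ∈ I, ∀ K : Set X, IsCompact K → A ∩ K ∈ I

/-- `γ` is an `I`-cover of `X`. -/
def IsIdealCover {X : Type u} (I : Set (Set X)) (γ : Set (Set X)) : Prop :=
  ∀ A ∈ I, ∃ U ∈ γ, A ⊆ U

/-- `C` is an `I`-sequence in `X`. -/
def IsIdealSeq {X : Type u} (I : Set (Set X)) (C : ℕ → Set X) : Prop :=
  ∀ A ∈ I, ∃ m : ℕ, ∀ n ≥ m, A ⊆ C n

/-- The property `γ_I`: every open `I`-cover contains an `I`-sequence. -/
def GammaIdeal (X : Type u) [TopologicalSpace X] (I : Set (Set X)) : Prop :=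
  ∀ γ : Set (Set X), (∀ U ∈ γ, IsOpen U) → IsIdealCover I γ →
    ∃ C : ℕ → Set X, (∀ n, C n ∈ γ) ∧ IsIdealSeq I C

/-- `γ` is an ω-cover of `X`: every finite set is contained in a member. -/
def IsOmegaCover {X : Type u} (γ : Set (Set X)) : Prop :=
  ∀ F : Set X, F.Finite → ∃ U ∈ γ, F ⊆ U

/-- The property `γ`: every open ω-cover contains a sequence in which every point
eventually lies. -/
def GammaP (X : Type u) [TopologicalSpace X] : Prop :=
  ∀ γ : Set (Set X), (∀ U ∈ γ, IsOpen U) → IsOmegaCover γ →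
    ∃ C : ℕ → Set X, (∀ n, C n ∈ γ) ∧ ∀ x : X, ∃ m : ℕ, ∀ n ≥ m, x ∈ C n

/-- The property `φ`. -/
def PhiP (X : Type u) [TopologicalSpace X] : Prop :=
  ∀ η : ℕ → Set (Set X),
    (∀ n, ∀ U ∈ η n, IsOpen U) →
    (∀ n, ∀ U ∈ η n, ∃ V ∈ η (n + 1), U ⊆ V) →
    IsOmegaCover (⋃ n, η n) →
    ∃ C : ℕ → Set X, (∀ x : X, ∃ m : ℕ, ∀ n ≥ m, x ∈ C n) ∧
      ∀ n, ∀ F : Set X, F.Finite → F ⊆ C n → ∃ U ∈ η n, F ⊆ U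

/-- The property `φ_I`. -/
def PhiIdeal (X : Type u) [TopologicalSpace X] (I : Set (Set X)) : Prop :=
  ∀ η : ℕ → Set (Set X),
    (∀ n, ∀ U ∈ η n, IsOpen U) →
    (∀ n, ∀ U ∈ η n, ∃ V ∈ η (n + 1), U ⊆ V) →
    IsIdealCover I (⋃ n, η n) →
    ∃ C : ℕ → Set X, IsIdealSeq I C ∧
      ∀ n, ∀ A ∈ I, A ⊆ C n → ∃ U ∈ η n, A ⊆ U

/-- The `I`-open topology on `Y^X`, generated by the sets `[K;U] = {f | f(K) ⊆ U}`
for `K ∈ I` and `U ⊆ Y` open. -/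
def idealOpenTopology {X : Type u} [TopologicalSpace X] (I : Set (Set X))
    (Y : Type v) [TopologicalSpace Y] : TopologicalSpace (X → Y) :=
  TopologicalSpace.generateFrom
    {S : Set (X → Y) | ∃ K ∈ I, ∃ U : Set Y, IsOpen U ∧ S = {f : X → Y | Set.MapsTo f K U}}

/-- Type synonym for `X → Y` carrying the `I`-open topology. -/
def IdealFn (X : Type u) (Y : Type v) [TopologicalSpace X] [TopologicalSpace Y]
    (I : Set (Set X)) : Type (max u v) := X → Y

instance IdealFn.instTopologicalSpace {X : Type u} {Y : Type v} [TopologicalSpace X]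
    [TopologicalSpace Y] (I : Set (Set X)) : TopologicalSpace (IdealFn X Y I) :=
  idealOpenTopology I Y

/-- `X` is `Y_I`-Tychonoff. -/
def IdealYTychonoff (X : Type u) (Y : Type v) [TopologicalSpace X] [TopologicalSpace Y]
    (I : Set (Set X)) : Prop :=
  ∀ A : Set X, IsClosed A → ∀ y₀ : Y, ∀ F ∈ I, F ⊆ Aᶜ →
    ∀ f : F → Y, Continuous f → (Set.range f).Finite →
      ∃ g : X → Y, Continuous g ∧ (∀ x : F, g x.1 = f x) ∧ g '' A ⊆ {y₀}

/-- `X` is `Y`-Tychonoff (the case of the ideal of finite sets, with arbitrary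
functions on finite sets). -/
def YTychonoff (X : Type u) (Y : Type v) [TopologicalSpace X] [TopologicalSpace Y] : Prop :=
  ∀ A : Set X, IsClosed A → ∀ y₀ : Y, ∀ F : Set X, F.Finite → F ⊆ Aᶜ →
    ∀ f : F → Y, ∃ g : X → Y, Continuous g ∧ (∀ x : F, g x.1 = f x) ∧ g '' A ⊆ {y₀}

/-- `H` is a relatively `D_I`-Tychonoff subspace of `S ⊆ Y^X`. -/
def RelTychonoffSub {X : Type u} {Y : Type v} [TopologicalSpace X]
    (I : Set (Set X)) (D : Set Y) (H S : Set (X → Y)) : Prop :=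
  ∀ A : Set X, IsClosed A → ∀ F ∈ I, F ⊆ Aᶜ → ∀ y₀ ∈ D, ∀ f ∈ S,
    (f '' F).Finite → f '' F ⊆ D →
      ∃ g ∈ H, Set.EqOn g f F ∧ g '' A ⊆ {y₀}

/-- `Z` is a k-space: for every non-closed `A ⊆ Z` there is a compact `K` such that
`A ∩ K` is not closed in `K`. -/
def IsKSpace (Z : Type u) [TopologicalSpace Z] : Prop :=
  ∀ A : Set Z, ¬ IsClosed A → ∃ K : Set Z, IsCompact K ∧
    ¬ IsClosed (Subtype.val ⁻¹' A : Set K)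

/-- `Z` has countable tightness. -/
def HasCountableTightness (Z : Type u) [TopologicalSpace Z] : Prop :=
  ∀ (A : Set Z) (z : Z), z ∈ closure A → ∃ B ⊆ A, B.Countable ∧ z ∈ closure B

/-- `⋃_n ⋂_{i ≥ n} U i`, the set of points eventually in all `U i`. -/
def seqLimInf {X : Type u} (U : ℕ → Set X) : Set X :=
  ⋃ n, ⋂ i, ⋂ (_ : n ≤ i), U i

/-- A zero-set in `X`. -/
def IsZeroSet {X : Type u} [TopologicalSpace X] (F : Set X) : Prop :=
  ∃ f : X → ℝ, Continuous f ∧ F = f ⁻¹' {0}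

/-- The Baire topology on `X`, with the zero-sets as a base. -/
def baireTopology (X : Type u) [TopologicalSpace X] : TopologicalSpace X :=
  TopologicalSpace.generateFrom {F : Set X | IsZeroSet F}

/-- `X` is `Y`-z-Tychonoff. -/
def YzTychonoff (X : Type u) (Y : Type v) [TopologicalSpace X] [TopologicalSpace Y] : Prop :=
  (T1Space X ∧ CompletelyRegularSpace X) ∧
  ∀ A : Set X, IsClosed A → ∀ n : ℕ, ∀ F : Fin n → Set X,
    (∀ i, IsZeroSet (F i)) → (∀ i j, i ≠ j → Disjoint (F i) (F j)) →
    (⋃ i, F i) ⊆ Aᶜ → ∀ y₀ : Y, ∀ y : Fin n → Y,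
      ∃ f : X → Y, Continuous f ∧ f '' A ⊆ {y₀} ∧ ∀ i, f '' (F i) ⊆ {y i}

/-- `X` is `Y`-normal. -/
def YNormal (X : Type u) (Y : Type v) [TopologicalSpace X] [TopologicalSpace Y] : Prop :=
  T1Space X ∧
  ∀ F : Set X, IsClosed F → ∀ f : F → Y, Continuous f → (Set.range f).Finite →
    ∃ g : X → Y, Continuous g ∧ ∀ x : F, g x.1 = f x

/-- `X` is `Y`-z-normal. -/
def YzNormal (X : Type u) (Y : Type v) [TopologicalSpace X] [TopologicalSpace Y] : Prop :=
  (T1Space X ∧ CompletelyRegularSpace X) ∧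
  ∀ F : Set X, IsZeroSet F → ∀ f : F → Y, Continuous f → (Set.range f).Finite →
    ∃ g : X → Y, Continuous g ∧ ∀ x : F, g x.1 = f x

/-- `f n` stably converges to `g`. -/
def StablyConvergesTo {X : Type u} {Y : Type v} (f : ℕ → X → Y) (g : X → Y) : Prop :=
  ∀ x : X, {n : ℕ | f n x ≠ g x}.Finite

/-- The stable Baire class one functions `B₁ˢᵗ(X,Y)`. -/
def BaireOneStable (X : Type u) (Y : Type v) [TopologicalSpace X] [TopologicalSpace Y] :
    Set (X → Y) :=
  {g | ∃ f : ℕ → X → Y, (∀ n, Continuous (f n)) ∧ StablyConvergesTo f g}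

/-- The Baire class one functions `B₁(X,Y)`, pointwise limits of sequences of
continuous functions. -/
def BaireOne (X : Type u) (Y : Type v) [TopologicalSpace X] [TopologicalSpace Y] :
    Set (X → Y) :=
  {g | ∃ f : ℕ → X → Y, (∀ n, Continuous (f n)) ∧
    ∀ x : X, Filter.Tendsto (fun n => f n x) Filter.atTop (nhds (g x))}

/-- The Baire functions `B(X,Y) = ⋃_{α<ω₁} B_α(X,Y)`: the smallest family containing
the continuous functions and closed under pointwise limits of sequences. -/
inductive IsBaireFun (X : Type u) (Y : Type v) [TopologicalSpace X] [TopologicalSpace Y] :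
    (X → Y) → Prop
  | cont (f : X → Y) : Continuous f → IsBaireFun X Y f
  | limit (f : ℕ → X → Y) (g : X → Y) : (∀ n, IsBaireFun X Y (f n)) →
      (∀ x : X, Filter.Tendsto (fun n => f n x) Filter.atTop (nhds (g x))) →
      IsBaireFun X Y g

/-- `Z` is scattered: every nonempty subset has an isolated point. -/
def IsScatteredSpace (Z : Type u) [TopologicalSpace Z] : Prop :=
  ∀ S : Set Z, S.Nonempty → ∃ x ∈ S, ∃ U : Set Z, IsOpen U ∧ U ∩ S = {x}

/-- The subspace `K` of `X` is scattered. -/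
def IsScatteredSubset {X : Type u} [TopologicalSpace X] (K : Set X) : Prop :=
  ∀ S : Set X, S ⊆ K → S.Nonempty → ∃ x ∈ S, ∃ U : Set X, IsOpen U ∧ U ∩ S = {x}

/-- The tightness `t(Z)`: the least infinite cardinal `κ` such that whenever
`z ∈ closure A` there is `B ⊆ A` with `#B ≤ κ` and `z ∈ closure B`. -/
noncomputable def tightnessCard (Z : Type u) [TopologicalSpace Z] : Cardinal.{u} :=
  sInf {κ : Cardinal.{u} | Cardinal.aleph0 ≤ κ ∧ ∀ (A : Set Z) (z : Z), z ∈ closure A →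
    ∃ B : Set Z, B ⊆ A ∧ Cardinal.mk B ≤ κ ∧ z ∈ closure B}

/-- The `I`-Lindelöf degree of `X`: the least infinite cardinal `κ` such that every
open `I`-cover has an `I`-subcover of cardinality `≤ κ`. -/
noncomputable def idealLindelofDeg (X : Type u) [TopologicalSpace X] (I : Set (Set X)) :
    Cardinal.{u} :=
  sInf {κ : Cardinal.{u} | Cardinal.aleph0 ≤ κ ∧ ∀ γ : Set (Set X), (∀ U ∈ γ, IsOpen U) →
    IsIdealCover I γ → ∃ γ' : Set (Set X), γ' ⊆ γ ∧ Cardinal.mk γ' ≤ κ ∧ IsIdealCover I γ'}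

/-!
If `X` is countable, every `g : X → ℝ` is the pointwise limit of continuous functions
interpolating it on an increasing exhaustion of `X` by finite sets, so `B₁(X) = ℝ^X`, a countable
power of `ℝ`.

Conversely, `B₁(X)` is always separable (sums of rational multiples of bumps around a countable
dense set are pointwise dense), so by Jones' lemma it suffices to find a closed discrete subset of
cardinality continuum. An uncountable Polish space contains a Cantor cube `e : (ℕ → Bool) → X`.
For a closed antichain `A` of size continuum in `ℕ → Bool`, the indicators of the sets
`e '' Iic a`, `a ∈ A`, form such a subset: a Baire one function in the pointwise closure of some of
them is the indicator of `e '' L`, where `L` agrees on every finite set with some `Iic a`. If `L`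
contains its "support" `d`, then `L = Iic d` and `d` is one of the `a`; otherwise `L` and its
complement are both dense in the compact space `Iic d`, which the Baire category theorem forbids
for a set with Baire one indicator.
-/

section BaireOne

variable {X : Type u} {Y : Type v} {Z : Type*} [TopologicalSpace X] [TopologicalSpace Y]
  [TopologicalSpace Z]

theorem Continuous.mem_baireOne {f : X → Y} (hf : Continuous f) : f ∈ BaireOne X Y :=
  ⟨fun _ => f, fun _ => hf, fun _ => tendsto_const_nhds⟩

theorem BaireOne.comp_continuous {g : Y → Z} (hg : g ∈ BaireOne Y Z) {e : X → Y}
    (he : Continuous e) : g ∘ e ∈ BaireOne X Z := by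
  obtain ⟨f, hf, hlim⟩ := hg
  exact ⟨fun n => f n ∘ e, fun n => (hf n).comp he, fun x => hlim (e x)⟩

theorem Continuous.comp_mem_baireOne {φ : Y → Z} (hφ : Continuous φ) {g : X → Y}
    (hg : g ∈ BaireOne X Y) : φ ∘ g ∈ BaireOne X Z := by
  obtain ⟨f, hf, hlim⟩ := hg
  exact ⟨fun n => φ ∘ f n, fun n => hφ.comp (hf n), fun x => (hφ.tendsto _).comp (hlim x)⟩

theorem BaireOne.exists_iUnion_isClosed_eq {A : Set X} (hA : A.indicator 1 ∈ BaireOne X ℝ) :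
    ∃ K : ℕ → Set X, (∀ N, IsClosed (K N)) ∧ ⋃ N, K N = A := by
  obtain ⟨f, hf, hlim⟩ := hA
  refine ⟨fun N => ⋂ n ≥ N, f n ⁻¹' Ici (1 / 2), fun N =>
    isClosed_biInter fun n _ => isClosed_Ici.preimage (hf n), ?_⟩
  ext x
  have hev : (∀ᶠ n in atTop, 1 / 2 ≤ f n x) ↔ x ∈ A := by
    refine ⟨fun h => ?_, fun hx => (hlim x).eventually (eventually_ge_nhds ?_)⟩
    · by_contra hx
      have := ge_of_tendsto (hlim x) h
      norm_num [hx] at this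
    · norm_num [hx]
  simpa [eventually_atTop] using hev

theorem isMeagre_iUnion_of_isClosed {K : ℕ → Set X} (hK : ∀ N, IsClosed (K N))
    (hd : Dense (⋃ N, K N)ᶜ) : IsMeagre (⋃ N, K N) := by
  refine isMeagre_iUnion fun N => ((hK N).isNowhereDense_iff.2 ?_).isMeagre
  have := hd.interior_compl
  rw [compl_compl] at this
  exact subset_empty_iff.1 (this ▸ interior_mono (subset_iUnion K N))

theorem BaireOne.not_dense_and_dense_compl [BaireSpace X] [Nonempty X] {A : Set X}
    (hA : A.indicator 1 ∈ BaireOne X ℝ) : ¬(Dense A ∧ Dense Aᶜ) := by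
  rintro ⟨hd, hdc⟩
  have hAc : Aᶜ.indicator 1 ∈ BaireOne X ℝ := by
    rw [indicator_compl]
    exact (continuous_const.sub continuous_id).comp_mem_baireOne hA
  obtain ⟨K, hK, rfl⟩ := BaireOne.exists_iUnion_isClosed_eq hA
  obtain ⟨K', hK', hK'A⟩ := BaireOne.exists_iUnion_isClosed_eq hAc
  have hmeagre := (isMeagre_iUnion_of_isClosed hK hdc).union
    (isMeagre_iUnion_of_isClosed hK' (by rwa [hK'A, compl_compl]))
  rw [hK'A, union_compl_self] at hmeagre
  exact not_isMeagre_of_isOpen isOpen_univ univ_nonempty hmeagre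

end BaireOne

section PointwiseClosure

theorem mem_closure_pi_iff_of_discreteTopology {ι : Type*} {β : ι → Type*}
    [∀ i, TopologicalSpace (β i)] [∀ i, DiscreteTopology (β i)] {s : Set (∀ i, β i)}
    {x : ∀ i, β i} : x ∈ closure s ↔ ∀ I : Finset ι, ∃ y ∈ s, ∀ i ∈ I, y i = x i := by
  have hbasis := Filter.hasBasis_pi_pure x
  simp only [← nhds_discrete, ← nhds_pi] at hbasis
  rw [mem_closure_iff_nhds_basis hbasis]
  exact ⟨fun h I => h I I.finite_toSet, fun h I hI => by simpa using h hI.toFinset⟩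

theorem mem_closure_pi_iff_dist {X Y : Type*} [PseudoMetricSpace Y] {s : Set (X → Y)}
    {g : X → Y} : g ∈ closure s ↔ ∀ (I : Set X) (ε : X → ℝ), I.Finite → (∀ x ∈ I, 0 < ε x) →
      ∃ h ∈ s, ∀ x ∈ I, dist (h x) (g x) < ε x := by
  have hbasis := Filter.hasBasis_pi fun x : X => Metric.nhds_basis_ball (x := g x)
  rw [← nhds_pi] at hbasis
  rw [mem_closure_iff_nhds_basis hbasis]
  simp only [Set.mem_pi, Metric.mem_ball, and_imp, Prod.forall]

theorem exists_eq_indicator_of_mem_closure_indicators {X ι : Type*} {K : ι → Set X} {T : Set ι}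
    {g : X → ℝ} (hg : g ∈ closure ((fun a => (K a).indicator 1) '' T)) :
    ∃ G : Set X, g = G.indicator 1 ∧ ∀ F : Finset X, ∃ a ∈ T, ∀ x ∈ F, x ∈ G ↔ x ∈ K a := by
  have hpair : ∀ x, g x = 0 ∨ g x = 1 := by
    have hcl : IsClosed (univ.pi fun _ : X => ({0, 1} : Set ℝ)) :=
      isClosed_set_pi fun _ _ => (toFinite _).isClosed
    have hsub : (fun a => (K a).indicator 1) '' T ⊆ univ.pi fun _ : X => ({0, 1} : Set ℝ) := by
      rintro _ ⟨a, -, rfl⟩ x -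
      by_cases hx : x ∈ K a <;> simp [hx]
    simpa using closure_minimal hsub hcl hg
  refine ⟨{x | g x = 1}, funext fun x => ?_, fun F => ?_⟩
  · rcases hpair x with h | h <;> simp [h]
  obtain ⟨_, ⟨a, haT, rfl⟩, ha⟩ :=
    mem_closure_pi_iff_dist.1 hg F (fun _ => 1 / 2) F.finite_toSet fun _ _ => by norm_num
  refine ⟨a, haT, fun x hx => ?_⟩
  have hdist := ha x hx
  have heq : (K a).indicator 1 x = g x := by
    by_contra hne
    rcases hpair x with h | h <;> by_cases hxa : x ∈ K a <;>
      simp_all [Real.dist_eq] <;> norm_num at hdist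
  change g x = 1 ↔ x ∈ K a
  by_cases hxa : x ∈ K a <;> simp [← heq, hxa]

end PointwiseClosure

section CantorCube

variable {ι : Type*}

/-- Equivalently, the indicator of `L` lies in the pointwise closure of the indicators of the sets
`Iic c`, `c ∈ T`. -/
def IsLocallyIic {α : Type*} [Preorder α] (T L : Set α) : Prop :=
  ∀ F : Finset α, ∃ c ∈ T, ∀ v ∈ F, v ∈ L ↔ v ≤ c

theorem isClosed_Iic_pi_bool (a : ι → Bool) : IsClosed (Iic a) := by
  rw [← pi_univ_Iic]
  exact isClosed_set_pi fun _ _ => isClosed_discrete _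

theorem update_bot_true_le_iff [DecidableEq ι] {j : ι} {v : ι → Bool} :
    Function.update ⊥ j true ≤ v ↔ v j = true := by
  simp [update_le_iff, Bool.le_iff_imp]

namespace IsLocallyIic

variable {T L : Set (ι → Bool)}

theorem mem_of_forall_exists_finset (hL : IsLocallyIic T L) {G : Finset (ι → Bool)}
    (hG : ∀ u ∈ G, u ∈ L) {v : ι → Bool} (hv : ∀ i, v i = true → ∃ u ∈ G, u i = true) :
    v ∈ L := by
  classical
  obtain ⟨c, -, hc⟩ := hL (insert v G)
  refine (hc v (Finset.mem_insert_self v G)).2 fun i => Bool.le_iff_imp.2 fun hi => ?_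
  obtain ⟨u, hu, hui⟩ := hv i hi
  exact Bool.le_iff_imp.1 ((hc u (Finset.mem_insert_of_mem hu)).1 (hG u hu) i) hui

theorem mem_of_le (hL : IsLocallyIic T L) {u v : ι → Bool} (hu : u ∈ L) (hvu : v ≤ u) :
    v ∈ L :=
  hL.mem_of_forall_exists_finset (G := {u}) (by simpa using hu) fun i hi =>
    ⟨u, Finset.mem_singleton_self u, Bool.le_iff_imp.1 (hvu i) hi⟩

theorem mem_closure [DecidableEq ι] (hL : IsLocallyIic T L) {d : ι → Bool}
    (hd : ∀ j, d j = true ↔ Function.update ⊥ j true ∈ L) : d ∈ closure T := by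
  classical
  refine mem_closure_pi_iff_of_discreteTopology.2 fun I => ?_
  obtain ⟨c, hcT, hc⟩ := hL (I.image fun j => Function.update ⊥ j true)
  refine ⟨c, hcT, fun j hj => Bool.eq_iff_iff.2 ?_⟩
  rw [hd, hc _ (Finset.mem_image_of_mem _ hj), update_bot_true_le_iff]

theorem dense_preimage_val [DecidableEq ι] (hL : IsLocallyIic T L) {d : ι → Bool}
    (hd : ∀ j, d j = true → Function.update ⊥ j true ∈ L) :
    Dense (Subtype.val ⁻¹' L : Set (Iic d)) := by
  classical
  refine Subtype.dense_iff.2 fun u hu => ?_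
  rw [Subtype.image_preimage_coe]
  refine mem_closure_pi_iff_of_discreteTopology.2 fun I => ?_
  refine ⟨fun i => u i && decide (i ∈ I), ⟨fun i => ?_, ?_⟩, fun i hi => by simp [hi]⟩
  · exact le_trans (Bool.le_iff_imp.2 fun h => by simp_all) (hu i)
  · refine hL.mem_of_forall_exists_finset
      (G := (I.image fun j => Function.update ⊥ j true).filter (· ∈ L)) (by simp) fun i hi => ?_
    simp only [Bool.and_eq_true, decide_eq_true_eq] at hi
    exact ⟨_, Finset.mem_filter.2 ⟨Finset.mem_image_of_mem _ hi.2,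
      hd i (Bool.le_iff_imp.1 (hu i) hi.1)⟩, by simp⟩

theorem dense_compl_preimage_val [DecidableEq ι] (hL : IsLocallyIic T L) {d : ι → Bool}
    (hd : ∀ j, d j = true → Function.update ⊥ j true ∈ L) (hdL : d ∉ L) :
    Dense (Subtype.val ⁻¹' L : Set (Iic d))ᶜ := by
  classical
  refine Subtype.dense_iff.2 fun u hu => ?_
  rw [← preimage_compl, Subtype.image_preimage_coe]
  refine mem_closure_pi_iff_of_discreteTopology.2 fun I => ?_
  refine ⟨fun i => if i ∈ I then u i else d i, ⟨fun i => ?_, fun hy => hdL ?_⟩,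
    fun i hi => by simp [hi]⟩
  · by_cases hi : i ∈ I <;> simp [hi, hu i]
  · -- `d` agrees with `y` off `I`, so `d ≤ y ⊔ ⨆_{i ∈ I, d i} {i}`, all of which lie in `L`
    refine hL.mem_of_forall_exists_finset (G := insert (fun i => if i ∈ I then u i else d i)
      ((I.image fun j => Function.update ⊥ j true).filter (· ∈ L))) (by simpa using hy)
      fun i hi => ?_
    by_cases hiI : i ∈ I
    · exact ⟨_, Finset.mem_insert_of_mem (Finset.mem_filter.2
        ⟨Finset.mem_image_of_mem _ hiI, hd i hi⟩), by simp⟩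
    · exact ⟨_, Finset.mem_insert_self _ _, by simp [hiI, hi]⟩

theorem exists_eq_Iic {A : Set (ι → Bool)} (hA : IsAntichain (· ≤ ·) A) (hAc : IsClosed A)
    (hTA : T ⊆ A) (hL : IsLocallyIic T L) (hB : L.indicator 1 ∈ BaireOne (ι → Bool) ℝ) :
    ∃ c ∈ T, L = Iic c := by
  classical
  set d : ι → Bool := fun j => decide (Function.update ⊥ j true ∈ L)
  have hd : ∀ j, d j = true ↔ Function.update ⊥ j true ∈ L := fun j => decide_eq_true_iff
  have hLd : L ⊆ Iic d := fun v hv j => Bool.le_iff_imp.2 fun hj =>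
    (hd j).2 (hL.mem_of_le hv (update_bot_true_le_iff.2 hj))
  by_cases hdL : d ∈ L
  · obtain ⟨c, hcT, hc⟩ := hL {d}
    have hdc : d = c := hA.eq (hAc.closure_subset_iff.2 hTA (hL.mem_closure hd)) (hTA hcT)
      ((hc d (Finset.mem_singleton_self d)).1 hdL)
    exact ⟨c, hcT, hdc ▸ hLd.antisymm fun v hv => hL.mem_of_le hdL hv⟩
  · -- the indicator of `L` restricted to the compact set `Iic d` would be a Baire one function
    -- with dense level sets
    have : CompactSpace (Iic d) := isCompact_iff_compactSpace.1 (isClosed_Iic_pi_bool d).isCompact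
    have : Nonempty (Iic d) := ⟨⟨⊥, mem_Iic.2 bot_le⟩⟩
    have : BaireSpace (Iic d) := BaireSpace.of_t2Space_locallyCompactSpace
    have hB' : (Subtype.val ⁻¹' L : Set (Iic d)).indicator 1 ∈ BaireOne (Iic d) ℝ := by
      convert BaireOne.comp_continuous hB continuous_subtype_val using 1
      ext v
      exact (indicator_comp_right (g := (1 : (ι → Bool) → ℝ)) Subtype.val).symm
    exact (BaireOne.not_dense_and_dense_compl hB'
      ⟨hL.dense_preimage_val fun j => (hd j).1,
        hL.dense_compl_preimage_val (fun j => (hd j).1) hdL⟩).elim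

end IsLocallyIic

end CantorCube

theorem separableSpace_baireOne_of_dense {X : Type u} [TopologicalSpace X] {D : Set (X → ℝ)}
    (hDc : D.Countable) (hDcont : ∀ d ∈ D, Continuous d) (hD : Dense D) : SeparableSpace (BaireOne X ℝ) := by
  refine ⟨⟨Subtype.val ⁻¹' D, hDc.preimage Subtype.val_injective, Subtype.dense_iff.2 ?_⟩⟩
  rw [Subtype.image_preimage_coe, inter_eq_right.2 fun d hd => (hDcont d hd).mem_baireOne,
    hD.closure_eq]
  exact subset_univ _

theorem Set.Finite.eventually_three_div_lt_dist {X : Type*} [MetricSpace X] {I : Set X}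
    (hI : I.Finite) :
    ∀ᶠ k : ℕ in atTop, ∀ p ∈ I ×ˢ I, p.1 ≠ p.2 → 3 * (1 / (k + 1 : ℝ)) < dist p.1 p.2 := by
  refine (eventually_all_finite (hI.prod hI)).2 fun p _ => ?_
  by_cases hp : p.1 = p.2
  · exact Eventually.of_forall fun _ h => (h hp).elim
  refine ((tendsto_one_div_add_atTop_nhds_zero_nat.const_mul 3).eventually_lt_const ?_).mono
    fun _ h _ => h
  simpa using dist_pos.2 hp

theorem exists_countable_dense_continuous (X : Type u) [MetricSpace X] [SeparableSpace X] :
    ∃ D : Set (X → ℝ), D.Countable ∧ (∀ d ∈ D, Continuous d) ∧ Dense D := by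
  obtain ⟨S, hSc, hSd⟩ := exists_countable_dense X
  have : Countable S := hSc.to_subtype
  have hr : ∀ k : ℕ, (0 : ℝ) < 1 / (k + 1) := fun k => Nat.one_div_pos_of_nat
  -- equal to `1` on `ball c r` and to `0` off `ball c (2 * r)`, where `r = 1 / (k + 1)`
  let bump (k : ℕ) (c x : X) : ℝ := thickenedIndicator (hr k) (Metric.ball c (1 / (k + 1))) x
  refine ⟨range fun l : List (ℕ × S × ℚ) => fun x => (l.map fun p => p.2.2 * bump p.1 p.2.1 x).sum,
    countable_range _, ?_, ?_⟩
  · rintro _ ⟨l, rfl⟩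
    exact continuous_list_sum _ fun p _ => continuous_const.mul
      (NNReal.continuous_coe.comp (thickenedIndicator _ _).continuous)
  refine dense_iff_closure_eq.2 (eq_univ_of_forall fun g =>
    mem_closure_pi_iff_dist.2 fun I ε hI hε => ?_)
  obtain ⟨k, hk⟩ := hI.eventually_three_div_lt_dist.exists
  choose c hcS hc using fun y => Metric.mem_closure_iff.1 (hSd.closure_eq ▸ mem_univ y) _ (hr k)
  choose! q hq using fun y (hy : y ∈ I) => exists_rat_near (g y) (hε y hy)
  refine ⟨_, ⟨hI.toFinset.toList.map fun y => (k, ⟨c y, hcS y⟩, q y), rfl⟩, fun x hx => ?_⟩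
  have hbump_self : ∀ y, bump k (c y) y = 1 := fun y => by
    simp only [bump, thickenedIndicator_one (hr k) _ (Metric.mem_ball.2 (hc y)), NNReal.coe_one]
  have hbump_ne : ∀ y ∈ I, y ≠ x → bump k (c y) x = 0 := fun y hy hyx => by
    suffices x ∉ Metric.thickening (1 / (k + 1)) (Metric.ball (c y) (1 / (k + 1))) by
      simp only [bump, thickenedIndicator_zero (hr k) _ this, NNReal.coe_zero]
    intro hmem
    have h1 : 3 * (1 / (k + 1)) < dist y x := hk (y, x) ⟨hy, hx⟩ hyx
    have h2 := Metric.mem_ball'.1 (Metric.thickening_ball _ _ _ hmem)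
    linarith [hc y, dist_triangle y (c y) x]
  simp only [List.map_map, Function.comp_def, Finset.sum_map_toList, Real.dist_eq]
  rw [Finset.sum_eq_single x (fun y hy hyx => by rw [hbump_ne y (hI.mem_toFinset.1 hy) hyx,
    mul_zero]) (fun h => (h (hI.mem_toFinset.2 hx)).elim), hbump_self, mul_one, abs_sub_comm]
  exact hq x hx

theorem IsClosed.indicator_one_mem_baireOne {X : Type u} [PseudoEMetricSpace X] {K : Set X}
    (hK : IsClosed K) : K.indicator 1 ∈ BaireOne X ℝ := by
  have hδ : ∀ n : ℕ, (0 : ℝ) < 1 / (n + 1) := fun n => Nat.one_div_pos_of_nat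
  have hlim := thickenedIndicator_tendsto_indicator_closure hδ
    tendsto_one_div_add_atTop_nhds_zero_nat K
  rw [hK.closure_eq, tendsto_pi_nhds] at hlim
  refine ⟨fun n x => thickenedIndicator (hδ n) K x, fun n =>
    NNReal.continuous_coe.comp (thickenedIndicator (hδ n) K).continuous, fun x => ?_⟩
  have hcoe :
      K.indicator (1 : X → ℝ) x = ((K.indicator (fun _ => (1 : NNReal)) x : NNReal) : ℝ) := by
    by_cases hx : x ∈ K <;> simp [hx]
  rw [hcoe]
  exact (NNReal.continuous_coe.tendsto _).comp (hlim x)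

section Transport

variable {ι : Type*} {X : Type u} [TopologicalSpace X] {e : (ι → Bool) → X}

theorem exists_eq_indicator_image_Iic (he : Continuous e) (hei : Function.Injective e)
    {A T : Set (ι → Bool)} (hA : IsAntichain (· ≤ ·) A) (hAc : IsClosed A) (hTA : T ⊆ A)
    {g : X → ℝ} (hg : g ∈ BaireOne X ℝ)
    (hgT : g ∈ closure ((fun a => (e '' Iic a).indicator 1) '' T)) :
    ∃ c ∈ T, g = (e '' Iic c).indicator 1 := by
  classical
  obtain ⟨G, rfl, hG⟩ := exists_eq_indicator_of_mem_closure_indicators hgT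
  have hL : IsLocallyIic T (e ⁻¹' G) := fun F => (hG (F.image e)).imp fun c ⟨hcT, hc⟩ =>
    ⟨hcT, fun v hv => (hc (e v) (Finset.mem_image_of_mem e hv)).trans hei.mem_set_image⟩
  have hB : (e ⁻¹' G).indicator 1 ∈ BaireOne (ι → Bool) ℝ := by
    convert BaireOne.comp_continuous hg he using 1
    ext v
    exact (indicator_comp_right (g := (1 : X → ℝ)) e).symm
  obtain ⟨c, hcT, hc⟩ := hL.exists_eq_Iic hA hAc hTA hB
  refine ⟨c, hcT, congrArg (fun s => s.indicator (1 : X → ℝ)) (Subset.antisymm (fun x hx => ?_) ?_)⟩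
  · obtain ⟨a, -, ha⟩ := hG {x}
    obtain ⟨v, -, rfl⟩ := (ha x (Finset.mem_singleton_self x)).1 hx
    exact mem_image_of_mem e (hc ▸ hx : v ∈ Iic c)
  · rintro _ ⟨v, hv, rfl⟩
    exact (hc.symm ▸ hv : v ∈ e ⁻¹' G)

end Transport

/-- At each pair of positions `2 * i`, `2 * i + 1` exactly one entry is `true`, namely the one
at `Nat.bit (z i) i`. -/
def pairCode (z : ℕ → Bool) : ℕ → Bool := fun n => z n.div2 == n.bodd

theorem eq_of_pairCode_le_pairCode {w z : ℕ → Bool} (h : pairCode w ≤ pairCode z) : w = z := by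
  funext i
  have := Bool.le_iff_imp.1 (h (Nat.bit (w i) i))
    (by simp only [pairCode, Nat.div2_bit, Nat.bodd_bit, beq_self_eq_true])
  simp only [pairCode, Nat.div2_bit, Nat.bodd_bit, beq_iff_eq] at this
  exact this.symm

theorem continuous_pairCode : Continuous pairCode :=
  continuous_pi fun n => (continuous_of_discreteTopology (f := fun b : Bool => b == n.bodd)).comp
    (continuous_apply n.div2)

theorem isAntichain_range_pairCode : IsAntichain (· ≤ ·) (range pairCode) := by
  rintro _ ⟨w, rfl⟩ _ ⟨z, rfl⟩ hne h
  exact hne (congrArg pairCode (eq_of_pairCode_le_pairCode h))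

theorem isClosed_range_pairCode : IsClosed (range pairCode) :=
  (isCompact_range continuous_pairCode).isClosed

theorem le_of_indicator_image_Iic_eq {ι X : Type*} {e : (ι → Bool) → X}
    (hei : Function.Injective e) {a b : ι → Bool}
    (hab : (e '' Iic a).indicator (1 : X → ℝ) = (e '' Iic b).indicator 1) : a ≤ b := by
  have : (e '' Iic b).indicator (1 : X → ℝ) (e a) ≠ 0 := by
    simp [← hab, indicator_of_mem (mem_image_of_mem e (mem_Iic.2 le_rfl))]
  exact hei.mem_set_image.1 (mem_of_indicator_ne_zero this)

theorem isClosed_discreteTopology_of_forall_subset {Y : Type*} [TopologicalSpace Y] {s : Set Y}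
    (h : ∀ t ⊆ s, IsClosed t) : IsClosed s ∧ DiscreteTopology s :=
  ⟨h s Subset.rfl, discreteTopology_iff_forall_isClosed.2 fun t => by
    have := (h _ (Subtype.coe_image_subset s t)).preimage (continuous_subtype_val (p := (· ∈ s)))
    rwa [preimage_image_eq t Subtype.val_injective] at this⟩

open Cardinal in
theorem exists_isClosed_discreteTopology_continuum_le_mk_baireOne {X : Type u} [MetricSpace X]
    {e : (ℕ → Bool) → X} (he : Continuous e) (hei : Function.Injective e) :
    ∃ S : Set (BaireOne X ℝ), IsClosed S ∧ DiscreteTopology S ∧ 𝔠 ≤ #S := by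
  set f : (ℕ → Bool) → X → ℝ := fun a => (e '' Iic a).indicator 1
  have hfB : ∀ a, f a ∈ BaireOne X ℝ := fun a =>
    ((isClosed_Iic_pi_bool a).isCompact.image he).isClosed.indicator_one_mem_baireOne
  set S : Set (BaireOne X ℝ) := Subtype.val ⁻¹' (f '' range pairCode)
  obtain ⟨hS, hSd⟩ : IsClosed S ∧ DiscreteTopology S := by
    refine isClosed_discreteTopology_of_forall_subset fun t ht => isClosed_of_closure_subset
      fun b hb => ?_
    have hbT : (b : X → ℝ) ∈ closure (f '' {a ∈ range pairCode | f a ∈ Subtype.val '' t}) := by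
      refine closure_mono ?_ (closure_subtype.1 hb)
      rintro _ ⟨b', hb', rfl⟩
      obtain ⟨a, ha, hab⟩ := ht hb'
      exact ⟨a, ⟨ha, b', hb', hab.symm⟩, hab⟩
    obtain ⟨c, ⟨-, b', hb', hb'c⟩, hc⟩ := exists_eq_indicator_image_Iic he hei
      isAntichain_range_pairCode isClosed_range_pairCode (sep_subset _ _) b.2 hbT
    exact Subtype.ext (hc.trans hb'c.symm) ▸ hb'
  refine ⟨S, hS, hSd, ?_⟩
  have hinj : Function.Injective fun z : ℕ → Bool =>
      (⟨⟨f (pairCode z), hfB _⟩, pairCode z, mem_range_self z, rfl⟩ : S) := fun z w h =>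
    eq_of_pairCode_le_pairCode (le_of_indicator_image_Iic_eq hei (congrArg (fun b : S => b.1.1) h))
  simpa using Cardinal.lift_mk_le_lift_mk_of_injective hinj

section Countable

variable {X : Type u} [TopologicalSpace X] [T1Space X] [NormalSpace X]

theorem exists_continuous_eqOn_of_finite {F : Set X} (hF : F.Finite) (g : X → ℝ) :
    ∃ h : X → ℝ, Continuous h ∧ EqOn h g F := by
  have : Finite F := hF
  obtain ⟨h, hh⟩ := ContinuousMap.exists_restrict_eq hF.isClosed
    ⟨fun x : F => g x, continuous_of_discreteTopology⟩
  exact ⟨h, h.continuous, fun x hx => DFunLike.congr_fun hh ⟨x, hx⟩⟩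

theorem baireOne_eq_univ_of_countable [Countable X] : BaireOne X ℝ = univ := by
  refine eq_univ_of_forall fun g => ?_
  obtain ⟨ν, hν⟩ := exists_injective_nat X
  choose h hh hhg using fun n : ℕ =>
    exists_continuous_eqOn_of_finite ((finite_Iic n).preimage hν.injOn) g
  exact ⟨h, hh, fun x => tendsto_atTop_of_eventually_const fun n hn => hhg n (mem_Iic.2 hn)⟩

end Countable

theorem countable_of_normalSpace_baireOne {X : Type u} [TopologicalSpace X] [PolishSpace X]
    [NormalSpace (BaireOne X ℝ)] : Countable X := by
  by_contra hX
  let := upgradeIsCompletelyMetrizable X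
  obtain ⟨e, -, he, hei⟩ := isClosed_univ.exists_nat_bool_injection_of_not_countable
    (countable_univ_iff.not.2 hX)
  obtain ⟨S, hS, hSd, hSc⟩ := exists_isClosed_discreteTopology_continuum_le_mk_baireOne he hei
  obtain ⟨D, hDc, hDcont, hD⟩ := exists_countable_dense_continuous X
  have := separableSpace_baireOne_of_dense hDc hDcont hD
  exact hS.not_normal_of_continuum_le_mk hSc ‹_›

/-- For a Polish space `X`, the space `B₁(X) = B₁(X,ℝ)` of real-valued
Baire class one functions with the pointwise topology is normal iff `X` is countable;
in that case `B₁(X) = ℝ^X` and it is a separable metrizable space. -/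
theorem baireOne_normal_iff_countable {X : Type u} [TopologicalSpace X] [PolishSpace X] :
    ((T1Space ↥(BaireOne X ℝ) ∧ NormalSpace ↥(BaireOne X ℝ)) ↔ Countable X) ∧
    (Countable X → (BaireOne X ℝ = Set.univ ∧
      TopologicalSpace.SeparableSpace ↥(BaireOne X ℝ) ∧
      TopologicalSpace.MetrizableSpace ↥(BaireOne X ℝ))) := by
  let := upgradeIsCompletelyMetrizable X
  refine ⟨⟨fun ⟨_, _⟩ => countable_of_normalSpace_baireOne, fun hX => ?_⟩, fun hX =>
    ⟨baireOne_eq_univ_of_countable, inferInstance, inferInstance⟩⟩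
  let := metrizableSpaceMetric (BaireOne X ℝ)
  exact ⟨inferInstance, inferInstance⟩
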